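/- arXiv:1611.02826 — 6 statements merged into one kernel-verified Lean document; each statement's English description precedes it below -/
import Mathlib

section
/- Let R be a commutative noetherian ring. Then R is artinian if and only if for every sequence I_1, I_2, ... of ideals of R one has V(⋂_{n≥1} I_n) = ⋃_{n≥1} V(I_n), where V(I) denotes the set of prime ideals containing I. -/
open PrimeSpectrum

/-- Descent of artinianness along a surjective algebra map. -/
private theorem isArtinian_of_surjective_algebraMap_aux {R S M : Type*} [CommRing R] [CommRing S]
    [AddCommGroup M] [Algebra R S] [Module S M] [Module R M] [IsScalarTower R S M]
    (h : Function.Surjective (algebraMap R S)) [ha : IsArtinian S M] : IsArtinian R M := by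
  let e : Submodule R M ↪o Submodule S M :=
    { toFun := fun p =>
        { carrier := p
          zero_mem' := p.zero_mem
          add_mem' := fun ha hb => p.add_mem ha hb
          smul_mem' := fun c x hx => by
            obtain ⟨r, rfl⟩ := h c
            rw [algebraMap_smul]
            exact p.smul_mem r hx }
      inj' := fun p q hpq => by
        ext x
        exact SetLike.ext_iff.mp hpq x
      map_rel_iff' := by
        intro p q
        constructor
        · intro h' x hx; exact h' hx
        · intro h' x hx; exact h' hx }
  exact ⟨e.wellFounded ha.wf⟩

/-- A finite module killed by a maximal ideal is artinian. -/
private theorem isArtinian_of_torsionBySet_maximal {R M : Type*} [CommRing R] [AddCommGroup M]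
    [Module R M] [Module.Finite R M] {m : Ideal R} [m.IsMaximal]
    (htor : Module.IsTorsionBySet R M (m : Set R)) : IsArtinian R M := by
  letI : Module (R ⧸ m) M := htor.module
  haveI : IsScalarTower R (R ⧸ m) M := htor.isScalarTower
  haveI : Module.Finite (R ⧸ m) M := Module.Finite.of_restrictScalars_finite R (R ⧸ m) M
  haveI : IsArtinianRing (R ⧸ m) := by
    letI := Ideal.Quotient.field m
    exact inferInstance
  haveI : IsArtinian (R ⧸ m) M := isArtinian_of_fg_of_artinian'
  exact isArtinian_of_surjective_algebraMap_aux (S := R ⧸ m) Ideal.Quotient.mk_surjective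

/-- If a finite module over a noetherian ring is killed by a finite product of maximal
ideals, it is artinian. -/
private theorem isArtinian_of_prodMaximal {R : Type*} [CommRing R] [IsNoetherianRing R] :
    ∀ s : List (Ideal R), (∀ m ∈ s, m.IsMaximal) →
    ∀ (M : Type*) [AddCommGroup M] [Module R M] [Module.Finite R M],
      s.prod • (⊤ : Submodule R M) = ⊥ → IsArtinian R M := by
  intro s
  induction s with
  | nil =>
    intro _ M _ _ _ hbot
    rw [List.prod_nil, one_smul] at hbot
    have : Subsingleton M := by
      constructor
      intro a b
      have ha : a ∈ (⊥ : Submodule R M) := hbot ▸ Submodule.mem_top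
      have hb : b ∈ (⊥ : Submodule R M) := hbot ▸ Submodule.mem_top
      rw [Submodule.mem_bot] at ha hb
      rw [ha, hb]
    infer_instance
  | cons m s ih =>
    intro hmax M _ _ _ hbot
    rw [List.prod_cons] at hbot
    haveI : m.IsMaximal := hmax m List.mem_cons_self
    have hsmax : ∀ m' ∈ s, m'.IsMaximal := fun m' hm' => hmax m' (List.mem_cons_of_mem m hm')
    set N : Submodule R M := s.prod • (⊤ : Submodule R M) with hN
    -- the quotient M ⧸ N is artinian by induction
    have hq : IsArtinian R (M ⧸ N) := by
      apply ih hsmax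
      have : s.prod • (⊤ : Submodule R (M ⧸ N)) = Submodule.map N.mkQ (s.prod • ⊤) := by
        rw [Submodule.map_smul'', Submodule.map_top, Submodule.range_mkQ]
      rw [this, ← hN]
      rw [eq_bot_iff, Submodule.map_le_iff_le_comap]
      exact Submodule.le_comap_mkQ _ ⊥
    -- N is artinian: it is a finite-dimensional vector space over R ⧸ m
    have htor : Module.IsTorsionBySet R N (m : Set R) := by
      intro x r
      have hr : (r : R) ∈ m := r.2
      have : (r : R) • (x : M) ∈ (m * s.prod) • (⊤ : Submodule R M) := by
        rw [mul_smul]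
        exact Submodule.smul_mem_smul hr x.2
      rw [hbot, Submodule.mem_bot] at this
      exact Subtype.ext this
    haveI : IsNoetherian R M := inferInstance
    haveI : Module.Finite R N := Module.Finite.iff_fg.mpr (IsNoetherian.noetherian _)
    haveI hn : IsArtinian R N := isArtinian_of_torsionBySet_maximal htor
    exact isArtinian_of_range_eq_ker N.subtype N.mkQ
      (by rw [Submodule.range_subtype, Submodule.ker_mkQ])

/-- Hopkins: a noetherian ring in which every prime is maximal is artinian. -/
private theorem hopkins {R : Type*} [CommRing R] [IsNoetherianRing R]
    (H : ∀ p : Ideal R, p.IsPrime → p.IsMaximal) : IsArtinianRing R := by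
  obtain ⟨k, hk⟩ := IsNoetherianRing.isNilpotent_nilradical R
  set t := (minimalPrimes.finite_of_isNoetherianRing (R := R)).toFinset with ht
  set L : List (Ideal R) := (List.replicate k t.toList).flatten with hL
  have hmem : ∀ m ∈ L, m.IsMaximal := by
    intro m hm
    rw [hL, List.mem_flatten] at hm
    obtain ⟨l, hl, hml⟩ := hm
    rw [List.mem_replicate] at hl
    rw [hl.2] at hml
    have : m ∈ minimalPrimes R := by
      rw [← (minimalPrimes.finite_of_isNoetherianRing (R := R)).mem_toFinset, ← ht]
      exact Finset.mem_toList.mp hml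
    exact H m this.1.1
  have hprodle : L.prod ≤ ⊥ := by
    have h1 : L.prod = t.toList.prod ^ k := by
      rw [hL, List.prod_flatten, List.map_replicate, List.prod_replicate]
    have h2 : t.toList.prod ≤ nilradical R := by
      have : t.toList.prod = t.prod id := by
        rw [Finset.prod, Multiset.map_id]
        exact Multiset.prod_toList _
      rw [this]
      refine le_trans (Ideal.prod_le_inf) ?_
      rw [Finset.inf_id_eq_sInf]
      have hco : (↑t : Set (Ideal R)) = minimalPrimes R :=
        (minimalPrimes.finite_of_isNoetherianRing (R := R)).coe_toFinset
      rw [hco]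
      rw [show minimalPrimes R = Ideal.minimalPrimes ⊥ from rfl, Ideal.sInf_minimalPrimes]
      exact le_of_eq rfl
    calc L.prod = t.toList.prod ^ k := h1
      _ ≤ (nilradical R) ^ k := Ideal.pow_right_mono h2 k
      _ = ⊥ := hk
  have := isArtinian_of_prodMaximal L hmem R (by
    rw [smul_eq_mul, Ideal.mul_top]
    exact le_bot_iff.mp hprodle)
  exact this

/-- **Lemma 6.4.** A commutative noetherian ring `R` is artinian if and only if for every
sequence `I₁, I₂, …` of ideals of `R` one has `V(⋂ₙ Iₙ) = ⋃ₙ V(Iₙ)`. -/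
theorem artinian_iff_zeroLocus_iInf (R : Type*) [CommRing R] [IsNoetherianRing R] :
    IsArtinianRing R ↔
      ∀ I : ℕ → Ideal R,
        PrimeSpectrum.zeroLocus (R := R) ↑(⨅ n, I n) =
          ⋃ n, PrimeSpectrum.zeroLocus (R := R) ↑(I n) := by
  constructor
  · intro hA I
    apply subset_antisymm
    · intro p hp
      obtain ⟨N, hN⟩ := IsArtinian.monotone_stabilizes (R := R) (M := R)
        ⟨fun n => OrderDual.toDual ((Finset.range (n + 1)).inf I),
         fun a b hab => by
           simp only [OrderDual.toDual_le_toDual]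
           exact Finset.inf_mono (Finset.range_subset_range.mpr (by omega))⟩
      have hinf : (⨅ n, I n) = (Finset.range (N + 1)).inf I := by
        apply le_antisymm
        · exact Finset.le_inf fun i _ => iInf_le I i
        · refine le_iInf fun m => ?_
          have h1 : (Finset.range (N + 1)).inf I = (Finset.range (max N m + 1)).inf I := by
            have := hN (max N m) (le_max_left N m)
            exact congrArg OrderDual.ofDual this
          rw [h1]
          exact Finset.inf_le (Finset.mem_range.mpr (by omega))
      rw [PrimeSpectrum.mem_zeroLocus] at hp
      have hle : (⨅ n, I n) ≤ p.asIdeal := fun y hy => hp hy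
      rw [hinf] at hle
      obtain ⟨i, _, hip⟩ := (p.isPrime.inf_le').mp hle
      exact Set.mem_iUnion.mpr ⟨i, (PrimeSpectrum.mem_zeroLocus _ _).mpr hip⟩
    · refine Set.iUnion_subset fun n => PrimeSpectrum.zeroLocus_anti_mono ?_
      exact_mod_cast SetLike.coe_subset_coe.mpr (iInf_le I n)
  · intro H
    apply hopkins
    intro p hp
    constructor
    constructor
    · exact hp.ne_top
    · intro J hJ
      by_contra hJtop
      obtain ⟨x, hxJ, hxp⟩ := SetLike.exists_of_lt hJ
      haveI := hp
      have hxunit : ¬ IsUnit (Ideal.Quotient.mk p x) := by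
        intro hu
        obtain ⟨b, hb⟩ := isUnit_iff_exists_inv.mp hu
        obtain ⟨y, rfl⟩ := Ideal.Quotient.mk_surjective b
        have hmem : x * y - 1 ∈ p := by
          rw [← Ideal.Quotient.eq_zero_iff_mem, map_sub, map_one, map_mul, hb, sub_self]
        have h1 : (1 : R) ∈ J := by
          have hx1 : x * y ∈ J := J.mul_mem_right y hxJ
          have hx2 : x * y - 1 ∈ J := hJ.le hmem
          simpa using J.sub_mem hx1 hx2
        exact hJtop (Ideal.eq_top_iff_one J |>.mpr h1)
      have hspan : Ideal.span {Ideal.Quotient.mk p x} ≠ ⊤ := fun h =>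
        hxunit (Ideal.span_singleton_eq_top.mp h)
      have hKrull : ⨅ i : ℕ, (Ideal.span {Ideal.Quotient.mk p x}) ^ i = ⊥ :=
        Ideal.iInf_pow_eq_bot_of_isDomain _ hspan
      have hmemz : (⟨p, hp⟩ : PrimeSpectrum R) ∈
          PrimeSpectrum.zeroLocus (R := R) ↑(⨅ n, p ⊔ (Ideal.span {x}) ^ (n + 1)) := by
        rw [PrimeSpectrum.mem_zeroLocus]
        intro y hy
        simp only [SetLike.mem_coe, Ideal.mem_iInf] at hy
        have hmk : ∀ n : ℕ, Ideal.Quotient.mk p y ∈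
            (Ideal.span {Ideal.Quotient.mk p x}) ^ (n + 1) := by
          intro n
          have h1 : Ideal.Quotient.mk p y ∈
              Ideal.map (Ideal.Quotient.mk p) (p ⊔ (Ideal.span {x}) ^ (n + 1)) :=
            Ideal.mem_map_of_mem _ (hy n)
          simp only [Ideal.map_sup, Ideal.map_quotient_self, Ideal.map_pow, bot_sup_eq] at h1
          rwa [Ideal.map_span, Set.image_singleton] at h1
        have hall : Ideal.Quotient.mk p y ∈ ⨅ i : ℕ, (Ideal.span {Ideal.Quotient.mk p x}) ^ i := by
          rw [Ideal.mem_iInf]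
          intro i
          cases i with
          | zero => simp [Ideal.one_eq_top]
          | succ n => exact hmk n
        rw [hKrull, Ideal.mem_bot] at hall
        exact Ideal.Quotient.eq_zero_iff_mem.mp hall
      rw [H (fun n => p ⊔ (Ideal.span {x}) ^ (n + 1))] at hmemz
      obtain ⟨n, hn⟩ := Set.mem_iUnion.mp hmemz
      rw [PrimeSpectrum.mem_zeroLocus] at hn
      have hInp : p ⊔ (Ideal.span {x}) ^ (n + 1) ≤ p := fun y hy => hn hy
      have hxpow : x ^ (n + 1) ∈ p :=
        hInp (Submodule.mem_sup_right
          (Ideal.pow_mem_pow (Ideal.subset_span (Set.mem_singleton x)) (n + 1)))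
      exact hxp (hp.mem_of_pow_mem _ hxpow)
end

section
/- Let R be a commutative noetherian ring. The following are equivalent: (1) Spec R is a finite set; (2) there are only finitely many specialization-closed subsets of Spec R; (3) there are only finitely many closed subsets of Spec R; (4) every specialization-closed subset of Spec R is closed. -/
/-- **Lemma 4.6.** For a commutative noetherian ring `R`, the following are equivalent:
(1) `Spec R` is finite; (2) there are only finitely many specialization-closed subsets of
`Spec R`; (3) there are only finitely many closed subsets of `Spec R`; (4) every
specialization-closed subset of `Spec R` is closed. -/
theorem specFinite_tfae (R : Type*) [CommRing R] [IsNoetherianRing R] :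
    List.TFAE
      [Finite (PrimeSpectrum R),
        {s : Set (PrimeSpectrum R) | StableUnderSpecialization s}.Finite,
        {s : Set (PrimeSpectrum R) | IsClosed s}.Finite,
        ∀ s : Set (PrimeSpectrum R), StableUnderSpecialization s → IsClosed s] := by
  tfae_have 1 → 2
  | h => Set.toFinite _
  tfae_have 2 → 3
  | h => h.subset fun s hs => hs.stableUnderSpecialization
  tfae_have 3 → 4
  | h, s, hs => by
    set T : Set (Set (PrimeSpectrum R)) := (fun x => closure {x}) '' s with hT
    have hTfin : T.Finite := h.subset (by rintro t ⟨x, -, rfl⟩; exact isClosed_closure)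
    have heq : s = ⋃ t ∈ T, t := by
      apply Set.Subset.antisymm
      · intro x hx
        exact Set.mem_biUnion ⟨x, hx, rfl⟩ (subset_closure rfl)
      · intro y hy
        obtain ⟨t, ht, hyt⟩ := Set.mem_iUnion₂.mp hy
        obtain ⟨x, hx, rfl⟩ := ht
        exact hs (specializes_iff_mem_closure.mpr hyt) hx
    rw [heq]
    refine hTfin.isClosed_biUnion ?_
    rintro t ⟨x, -, rfl⟩
    exact isClosed_closure
  tfae_have 4 → 1
  | h => by
    by_contra hfin
    rw [not_finite_iff_infinite] at hfin
    have hne : {Z : TopologicalSpace.Closeds (PrimeSpectrum R) |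
        (Z : Set (PrimeSpectrum R)).Infinite}.Nonempty := ⟨⊤, Set.infinite_univ⟩
    obtain ⟨Z, hZinf, hZmin⟩ := (wellFounded_lt
      (α := TopologicalSpace.Closeds (PrimeSpectrum R))).has_min _ hne
    have hZinf : (Z : Set (PrimeSpectrum R)).Infinite := hZinf
    have hZcl : IsClosed (Z : Set (PrimeSpectrum R)) := Z.isClosed
    have hirr : IsIrreducible (Z : Set (PrimeSpectrum R)) := by
      refine ⟨hZinf.nonempty, ?_⟩
      rw [isPreirreducible_iff_isClosed_union_isClosed]
      intro z₁ z₂ hz₁ hz₂ hsub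
      by_contra hcon
      push_neg at hcon
      obtain ⟨h1, h2⟩ := hcon
      have hor : ((Z : Set (PrimeSpectrum R)) ∩ z₁).Infinite ∨
          ((Z : Set (PrimeSpectrum R)) ∩ z₂).Infinite := by
        by_contra hc
        push_neg at hc
        have hsub' : (Z : Set (PrimeSpectrum R)) ⊆
            ((Z : Set (PrimeSpectrum R)) ∩ z₁) ∪ ((Z : Set (PrimeSpectrum R)) ∩ z₂) := by
          intro x hx
          rcases hsub hx with hx1 | hx2
          · exact Or.inl ⟨hx, hx1⟩
          · exact Or.inr ⟨hx, hx2⟩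
        exact hZinf ((hc.1.union hc.2).subset hsub')
      rcases hor with hinf | hinf
      · refine hZmin ⟨(Z : Set (PrimeSpectrum R)) ∩ z₁, hZcl.inter hz₁⟩ hinf (lt_of_le_of_ne (fun x hx => hx.1) ?_)
        intro he
        apply h1
        intro x hx
        have hset : (Z : Set (PrimeSpectrum R)) ∩ z₁ = (Z : Set (PrimeSpectrum R)) :=
          SetLike.ext'_iff.mp he
        exact (hset.ge hx).2
      · refine hZmin ⟨(Z : Set (PrimeSpectrum R)) ∩ z₂, hZcl.inter hz₂⟩ hinf (lt_of_le_of_ne (fun x hx => hx.1) ?_)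
        intro he
        apply h2
        intro x hx
        have hset : (Z : Set (PrimeSpectrum R)) ∩ z₂ = (Z : Set (PrimeSpectrum R)) :=
          SetLike.ext'_iff.mp he
        exact (hset.ge hx).2
    obtain ⟨p, hp⟩ : ∃ p, closure ({p} : Set (PrimeSpectrum R)) = Z :=
      ⟨hirr.genericPoint, hirr.isGenericPoint_genericPoint hZcl⟩
    set A : Set (PrimeSpectrum R) := (Z : Set (PrimeSpectrum R)) \ {p} with hA
    have hAspec : StableUnderSpecialization A := by
      rintro x y hxy ⟨hxZ, hxp⟩
      refine ⟨hZcl.stableUnderSpecialization hxy hxZ, ?_⟩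
      intro hyp
      apply hxp
      have hxp' : p ⤳ x :=
        specializes_iff_mem_closure.mpr (hp ▸ hxZ : x ∈ closure ({p} : Set (PrimeSpectrum R)))
      have hpx : x ⤳ p := hyp ▸ hxy
      exact (hpx.antisymm hxp').eq
    have hAcl : IsClosed A := h A hAspec
    have hAinf : A.Infinite := hZinf.diff (Set.finite_singleton p)
    refine hZmin ⟨A, hAcl⟩ hAinf (lt_of_le_of_ne Set.diff_subset ?_)
    intro he
    have hpZ : p ∈ (Z : Set (PrimeSpectrum R)) := hp ▸ subset_closure rfl
    have hset : A = (Z : Set (PrimeSpectrum R)) :=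
      SetLike.ext'_iff.mp he
    have hpA : p ∈ A := hset.ge hpZ
    exact hpA.2 rfl
  tfae_finish
end

section
/- Let R be a commutative noetherian ring. If every specialization-closed subset of Spec R is closed, then R is semilocal, i.e., R has only finitely many maximal ideals. -/
/-- If every specialization-closed subset of `Spec R` is closed (for `R` commutative
noetherian), then `R` is semilocal, i.e. has only finitely many maximal ideals. -/
theorem semilocal_of_stableUnderSpecialization_isClosed (R : Type*) [CommRing R]
    [IsNoetherianRing R]
    (h : ∀ s : Set (PrimeSpectrum R), StableUnderSpecialization s → IsClosed s) :
    {I : Ideal R | I.IsMaximal}.Finite := by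
  set M : Set (PrimeSpectrum R) := {x | x.asIdeal.IsMaximal} with hM
  have hstab : StableUnderSpecialization M := by
    intro x y hxy hx
    have hle : x.asIdeal ≤ y.asIdeal :=
      (PrimeSpectrum.le_iff_specializes _ _).mpr hxy
    have : y.asIdeal = x.asIdeal := (hx.eq_of_le y.isPrime.ne_top hle).symm
    simpa [hM, this] using hx
  have hclosed : IsClosed M := h M hstab
  haveI : TopologicalSpace.NoetherianSpace (PrimeSpectrum R) :=
    inferInstance
  obtain ⟨S, hSfin, hScl, hSirr, hSU⟩ :=
    TopologicalSpace.NoetherianSpace.exists_finite_set_isClosed_irreducible hclosed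
  have hMfin : M.Finite := by
    rw [hSU]
    refine Set.Finite.sUnion hSfin ?_
    intro t ht
    have hirr := hSirr t ht
    have hgen := hirr.isGenericPoint_genericPoint (hScl t ht)
    have hx : hirr.genericPoint ∈ t := hgen.mem
    have hxM : hirr.genericPoint ∈ M := by
      rw [hSU]; exact Set.mem_sUnion.mpr ⟨t, ht, hx⟩
    have hxcl : IsClosed ({hirr.genericPoint} : Set (PrimeSpectrum R)) :=
      (PrimeSpectrum.isClosed_singleton_iff_isMaximal _).mpr hxM
    have : t = {hirr.genericPoint} := by
      exact hgen.def.symm.trans hxcl.closure_eq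
    rw [this]; exact Set.finite_singleton _
  have : {I : Ideal R | I.IsMaximal} ⊆ PrimeSpectrum.asIdeal '' M := by
    intro I hI
    exact ⟨⟨I, hI.isPrime⟩, hI, rfl⟩
  exact (hMfin.image _).subset this
end

section
/- Let R be a commutative noetherian ring, p a prime ideal of R, and X a bounded-above complex of finitely generated R-modules. Then the localization X_p is acyclic if and only if the derived tensor product κ(p) ⊗^L_R X is acyclic, where κ(p) = R_p/pR_p is the residue field at p. -/
open CategoryTheory Limits MonoidalCategory


open CategoryTheory Limits MonoidalCategory TensorProduct

namespace Prop15


variable {A : Type} [CommRing A]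
variable {Y : ℤ → Type} [∀ i, AddCommGroup (Y i)] [∀ i, Module A (Y i)]

/-- The quotient complex differential `Y i ⧸ I•⊤ → Y (i+1) ⧸ I•⊤`. -/
noncomputable def dq (d : ∀ i, Y i →ₗ[A] Y (i+1)) (I : Ideal A) (i : ℤ) :
    (Y i ⧸ (I • ⊤ : Submodule A (Y i))) →ₗ[A] (Y (i+1) ⧸ (I • ⊤ : Submodule A (Y (i+1)))) :=
  Submodule.mapQ _ _ (d i) (by
    intro x hx
    have h1 : d i x ∈ Submodule.map (d i) (I • (⊤ : Submodule A (Y i))) :=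
      Submodule.mem_map_of_mem hx
    rw [Submodule.map_smul''] at h1
    exact Submodule.smul_mono le_rfl le_top h1)

lemma dq_mk (d : ∀ i, Y i →ₗ[A] Y (i+1)) (I : Ideal A) (i : ℤ) (y : Y i) :
    dq d I i (Submodule.Quotient.mk y) = Submodule.Quotient.mk (d i y) :=
  Submodule.mapQ_apply _ _ _ _

lemma extend_h (d : ∀ i, Y i →ₗ[A] Y (i+1))
    (hdd : ∀ i x, d (i+1) (d i x) = 0) (i : ℤ) (hP : Module.Projective A (Y (i+1)))
    (hsurj : ∀ z, d (i+1) z = 0 → z ∈ Set.range (d i))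
    (h₂ : Y (i+1+1) →ₗ[A] Y (i+1)) (h₃ : Y (i+1+1+1) →ₗ[A] Y (i+1+1))
    (rel : ∀ y : Y (i+1+1), d (i+1) (h₂ y) + h₃ (d (i+1+1) y) = y) :
    ∃ h₁ : Y (i+1) →ₗ[A] Y i, ∀ y, d i (h₁ y) + h₂ (d (i+1) y) = y := by
  set Z := LinearMap.ker (d (i+1)) with hZ
  have hπ0 : ∀ y : Y (i+1), d (i+1) (y - h₂ (d (i+1) y)) = 0 := by
    intro y
    have h1 := rel (d (i+1) y)
    have h2 : d (i+1+1) (d (i+1) y) = 0 := hdd (i+1) y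
    rw [h2, map_zero, add_zero] at h1
    rw [map_sub, h1, sub_self]
  let π : Y (i+1) →ₗ[A] Z :=
    LinearMap.codRestrict Z (LinearMap.id - h₂ ∘ₗ d (i+1)) (fun y => hπ0 y)
  let d' : Y i →ₗ[A] Z := LinearMap.codRestrict Z (d i) (fun x => hdd i x)
  have hd's : Function.Surjective d' := by
    rintro ⟨z, hz⟩
    obtain ⟨x, hx⟩ := hsurj z hz
    exact ⟨x, Subtype.ext hx⟩
  obtain ⟨h₁, hh₁⟩ := Module.projective_lifting_property d' π hd's
  refine ⟨h₁, fun y => ?_⟩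
  have h3 : d' (h₁ y) = π y := by rw [← LinearMap.comp_apply, hh₁]
  have h4 := congrArg Subtype.val h3
  simp only [LinearMap.codRestrict_apply, LinearMap.sub_apply, LinearMap.id_apply,
    LinearMap.comp_apply, π, d'] at h4
  change d i (h₁ y) = y - h₂ (d (i+1) y) at h4
  rw [h4]
  abel

lemma exact_step [IsLocalRing A] [IsNoetherianRing A]
    (d : ∀ i, Y i →ₗ[A] Y (i+1))
    (hdd : ∀ i x, d (i+1) (d i x) = 0) (i : ℤ) (hfin : Module.Finite A (Y (i+1)))
    (h₂ : Y (i+1+1) →ₗ[A] Y (i+1)) (h₃ : Y (i+1+1+1) →ₗ[A] Y (i+1+1))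
    (rel : ∀ y : Y (i+1+1), d (i+1) (h₂ y) + h₃ (d (i+1+1) y) = y)
    (hq : Function.Exact (dq d (IsLocalRing.maximalIdeal A) i)
      (dq d (IsLocalRing.maximalIdeal A) (i+1))) :
    ∀ z, d (i+1) z = 0 → z ∈ Set.range (d i) := by
  set m := IsLocalRing.maximalIdeal A with hm
  set Z := LinearMap.ker (d (i+1)) with hZ
  have hπ0 : ∀ y : Y (i+1), d (i+1) (y - h₂ (d (i+1) y)) = 0 := by
    intro y
    have h1 := rel (d (i+1) y)
    have h2 : d (i+1+1) (d (i+1) y) = 0 := hdd (i+1) y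
    rw [h2, map_zero, add_zero] at h1
    rw [map_sub, h1, sub_self]
  let π : Y (i+1) →ₗ[A] Z :=
    LinearMap.codRestrict Z (LinearMap.id - h₂ ∘ₗ d (i+1)) (fun y => hπ0 y)
  let d' : Y i →ₗ[A] Z := LinearMap.codRestrict Z (d i) (fun x => hdd i x)
  have key : ∀ z : Z, z ∈ (LinearMap.range d' ⊔ (m • ⊤) : Submodule A Z) := by
    intro z
    have h0 : dq d m (i+1) (Submodule.Quotient.mk (z : Y (i+1))) = 0 := by
      rw [dq_mk, z.2, Submodule.Quotient.mk_zero]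
    obtain ⟨w, hw⟩ := (hq _).mp h0
    obtain ⟨y, rfl⟩ := Submodule.Quotient.mk_surjective _ w
    rw [dq_mk] at hw
    have hmem : (z : Y (i+1)) - d i y ∈ (m • ⊤ : Submodule A (Y (i+1))) := by
      have h := (Submodule.Quotient.eq _).mp hw
      simpa [neg_sub] using Submodule.neg_mem _ h
    have h2 : π ((z : Y (i+1)) - d i y) ∈ (m • ⊤ : Submodule A Z) := by
      have h3 : π ((z : Y (i+1)) - d i y) ∈ Submodule.map π (m • ⊤) :=
        Submodule.mem_map_of_mem hmem
      rw [Submodule.map_smul''] at h3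
      exact Submodule.smul_mono le_rfl le_top h3
    have hπz : π ((z : Y (i+1)) - d i y) = z - d' y := by
      apply Subtype.ext
      have hz0 : d (i+1) (z : Y (i+1)) = 0 := z.2
      have hdy : d (i+1) (d i y) = 0 := hdd i y
      simp only [π, d', LinearMap.codRestrict_apply, LinearMap.sub_apply, LinearMap.id_apply,
        LinearMap.comp_apply, Submodule.coe_sub, map_sub, hz0, hdy, sub_zero, map_zero]
      change (z : Y (i+1)) - h₂ (d (i+1) z) - (d i y - h₂ (d (i+1) (d i y))) = z - d i y
      rw [hz0, hdy, map_zero, sub_zero, sub_zero]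
    rw [hπz] at h2
    have : z = d' y + (z - d' y) := by abel
    rw [this]
    exact Submodule.add_mem_sup (LinearMap.mem_range_self _ _) h2
  -- Nakayama
  have htop : (⊤ : Submodule A (Z ⧸ LinearMap.range d')) ≤
      m • (⊤ : Submodule A (Z ⧸ LinearMap.range d')) := by
    rintro c -
    obtain ⟨z, rfl⟩ := Submodule.Quotient.mk_surjective _ c
    obtain ⟨u, hu, v, hv, huv⟩ := Submodule.mem_sup.mp (key z)
    have h4 : (Submodule.Quotient.mk z : Z ⧸ LinearMap.range d') = Submodule.Quotient.mk v := by
      rw [Submodule.Quotient.eq]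
      rw [← huv]
      simpa using hu
    rw [h4]
    have h5 : (Submodule.Quotient.mk v : Z ⧸ LinearMap.range d') ∈
        Submodule.map (LinearMap.range d').mkQ (m • ⊤) := ⟨v, hv, rfl⟩
    rw [Submodule.map_smul''] at h5
    exact Submodule.smul_mono le_rfl le_top h5
  have hbot : (⊤ : Submodule A (Z ⧸ LinearMap.range d')) = ⊥ := by
    refine Submodule.eq_bot_of_le_smul_of_le_jacobson_bot m ⊤ ?_ htop ?_
    · exact Module.Finite.fg_top (R := A) (M := Z ⧸ LinearMap.range d')
    · rw [IsLocalRing.jacobson_eq_maximalIdeal ⊥ bot_ne_top]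
  intro z hz
  have h6 : ((⟨z, hz⟩ : Z) : Z) ∈ LinearMap.range d' := by
    rw [← Submodule.Quotient.mk_eq_zero]
    have : (Submodule.Quotient.mk (⟨z, hz⟩ : Z) : Z ⧸ LinearMap.range d') ∈
        (⊤ : Submodule A (Z ⧸ LinearMap.range d')) := Submodule.mem_top
    rw [hbot] at this
    simpa using this
  obtain ⟨x, hx⟩ := h6
  exact ⟨x, congrArg Subtype.val hx⟩
variable {A : Type} [CommRing A]
variable {Y : ℤ → Type} [∀ i, AddCommGroup (Y i)] [∀ i, Module A (Y i)]

lemma int_descending_induction {P : ℤ → Prop} (N : ℤ) (hbase : P (N-1))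
    (hmono : ∀ i j, i ≤ j → P i → P j) (hstep : ∀ i, P (i+1) → P i) : ∀ i, P i := by
  have key : ∀ k : ℕ, P (N - 1 - k) := by
    intro k
    induction k with
    | zero => simpa using hbase
    | succ n ih =>
      refine hstep _ ?_
      rwa [show N - 1 - ((n+1 : ℕ) : ℤ) + 1 = N - 1 - n by push_cast; ring]
  intro i
  refine hmono _ _ ?_ (key (N - 1 - i).toNat)
  have := Int.self_le_toNat (N - 1 - i)
  omega

lemma P_all (d : ∀ i, Y i →ₗ[A] Y (i+1)) (hP : ∀ i, Module.Projective A (Y i))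
    (hdd : ∀ i x, d (i+1) (d i x) = 0) (N : ℤ)
    (hN : ∀ i, N ≤ i → Subsingleton (Y i))
    (hsurj : ∀ i (h₂ : Y (i+1+1) →ₗ[A] Y (i+1)) (h₃ : Y (i+1+1+1) →ₗ[A] Y (i+1+1)),
      (∀ y : Y (i+1+1), d (i+1) (h₂ y) + h₃ (d (i+1+1) y) = y) →
      ∀ z, d (i+1) z = 0 → z ∈ Set.range (d i)) :
    ∀ i, ∃ h : ∀ j, Y (j+1) →ₗ[A] Y j,
      ∀ j, i ≤ j → ∀ y : Y (j+1), d j (h j y) + h (j+1) (d (j+1) y) = y := by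
  refine int_descending_induction N ?_ ?_ ?_
  · refine ⟨fun _ => 0, fun j hj y => ?_⟩
    have : Subsingleton (Y (j+1)) := hN _ (by omega)
    exact Subsingleton.elim _ _
  · rintro i j hij ⟨h, hh⟩
    exact ⟨h, fun k hk => hh k (le_trans hij hk)⟩
  · rintro i ⟨h, hh⟩
    have hs := hsurj i (h (i+1)) (h (i+1+1)) (hh (i+1) le_rfl)
    obtain ⟨h₁, hrel⟩ := extend_h d hdd i (hP (i+1)) hs (h (i+1)) (h (i+1+1))
      (hh (i+1) le_rfl)
    refine ⟨Function.update h i h₁, fun j hj y => ?_⟩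
    rcases eq_or_lt_of_le hj with rfl | hlt
    · rw [Function.update_self, Function.update_of_ne (by omega)]
      exact hrel y
    · rw [Function.update_of_ne (by omega), Function.update_of_ne (by omega)]
      exact hh j (by omega) y

/-- Direction 2 core: quotient-exactness implies exactness, over a noetherian local ring. -/
lemma exact_of_quot_exact [IsLocalRing A] [IsNoetherianRing A]
    (d : ∀ i, Y i →ₗ[A] Y (i+1))
    (hfin : ∀ i, Module.Finite A (Y i)) (hP : ∀ i, Module.Projective A (Y i))
    (hdd : ∀ i x, d (i+1) (d i x) = 0) (N : ℤ)
    (hN : ∀ i, N ≤ i → Subsingleton (Y i))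
    (hq : ∀ i, Function.Exact (dq d (IsLocalRing.maximalIdeal A) i)
      (dq d (IsLocalRing.maximalIdeal A) (i+1))) :
    ∀ i, Function.Exact (d i) (d (i+1)) := by
  have hall := P_all d hP hdd N hN
    (fun i h₂ h₃ rel => exact_step d hdd i (hfin (i+1)) h₂ h₃ rel (hq i))
  intro i
  obtain ⟨h, hh⟩ := hall i
  intro y
  constructor
  · intro hy
    have := hh i le_rfl y
    rw [hy, map_zero, add_zero] at this
    exact ⟨h i y, this⟩
  · rintro ⟨x, rfl⟩
    exact hdd i x

/-- Direction 1 core: exactness implies quotient-exactness (for any ideal), via a homotopy. -/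
lemma quot_exact_of_exact (d : ∀ i, Y i →ₗ[A] Y (i+1))
    (hP : ∀ i, Module.Projective A (Y i))
    (hdd : ∀ i x, d (i+1) (d i x) = 0) (N : ℤ)
    (hN : ∀ i, N ≤ i → Subsingleton (Y i))
    (hex : ∀ i, Function.Exact (d i) (d (i+1))) (I : Ideal A) :
    ∀ i, Function.Exact (dq d I i) (dq d I (i+1)) := by
  have hall := P_all d hP hdd N hN (fun i _ _ _ z hz => (hex i z).mp hz)
  intro i
  obtain ⟨h, hh⟩ := hall i
  -- quotient homotopy
  let hq : ∀ j, (Y (j+1) ⧸ (I • ⊤ : Submodule A (Y (j+1)))) →ₗ[A]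
      (Y j ⧸ (I • ⊤ : Submodule A (Y j))) := fun j =>
    Submodule.mapQ _ _ (h j) (by
      intro x hx
      have h1 : h j x ∈ Submodule.map (h j) (I • (⊤ : Submodule A (Y (j+1)))) :=
        Submodule.mem_map_of_mem hx
      rw [Submodule.map_smul''] at h1
      exact Submodule.smul_mono le_rfl le_top h1)
  intro w
  constructor
  · intro hw
    obtain ⟨y, rfl⟩ := Submodule.Quotient.mk_surjective _ w
    refine ⟨hq i (Submodule.Quotient.mk y), ?_⟩
    rw [show hq i (Submodule.Quotient.mk y) = Submodule.Quotient.mk (h i y) from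
      Submodule.mapQ_apply _ _ _ _]
    rw [dq_mk]
    have h2 := hh i le_rfl y
    have h3 : dq d I (i+1) (Submodule.Quotient.mk y) =
        Submodule.Quotient.mk (d (i+1) y) := dq_mk _ _ _ _
    rw [h3] at hw
    -- hw : mk (d (i+1) y) = 0, i.e. d (i+1) y ∈ I • ⊤
    have h4 : d (i+1) y ∈ (I • ⊤ : Submodule A (Y (i+1+1))) :=
      (Submodule.Quotient.mk_eq_zero _).mp hw
    -- mk (d i (h i y)) = mk (y - h (i+1) (d (i+1) y)) = mk y - mk (h (i+1) (d (i+1) y))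
    have h5 : h (i+1) (d (i+1) y) ∈ (I • ⊤ : Submodule A (Y (i+1))) := by
      have h6 : h (i+1) (d (i+1) y) ∈ Submodule.map (h (i+1)) (I • ⊤) :=
        Submodule.mem_map_of_mem h4
      rw [Submodule.map_smul''] at h6
      exact Submodule.smul_mono le_rfl le_top h6
    have h7 : d i (h i y) = y - h (i+1) (d (i+1) y) := eq_sub_of_add_eq h2
    rw [h7, Submodule.Quotient.eq]
    simpa using Submodule.neg_mem _ h5
  · rintro ⟨x, rfl⟩
    obtain ⟨y, rfl⟩ := Submodule.Quotient.mk_surjective _ x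
    rw [dq_mk, dq_mk, hdd, Submodule.Quotient.mk_zero]



lemma moduleCat_exact_iff_function_exact {R : Type} [Ring R]
    (S : ShortComplex (ModuleCat.{0} R)) :
    S.Exact ↔ Function.Exact S.f S.g := by
  rw [S.moduleCat_exact_iff]
  constructor
  · intro hS y
    exact ⟨fun hy => hS y hy, by rintro ⟨x, rfl⟩; exact S.moduleCat_zero_apply x⟩
  · intro hS y hy
    exact (hS y).mp hy

lemma acyclic_iff_exact {R : Type} [CommRing R] (M : ModuleCat.{0} R)
    (X : CochainComplex (ModuleCat.{0} R) ℤ) :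
    (∀ i : ℤ, IsZero
      ((((tensorLeft M).mapHomologicalComplex (ComplexShape.up ℤ)).obj X).homology i)) ↔
    (∀ i : ℤ, Function.Exact (LinearMap.lTensor M (X.d i (i+1)).hom)
      (LinearMap.lTensor M (X.d (i+1) (i+1+1)).hom)) := by
  set C := ((tensorLeft M).mapHomologicalComplex (ComplexShape.up ℤ)).obj X with hC
  have h1 : ∀ i : ℤ, IsZero (C.homology i) ↔ C.ExactAt i :=
    fun i => (C.exactAt_iff_isZero_homology i).symm
  have h2 : ∀ i : ℤ, C.ExactAt (i+1) ↔ Function.Exact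
      (LinearMap.lTensor M (X.d i (i+1)).hom) (LinearMap.lTensor M (X.d (i+1) (i+1+1)).hom) := by
    intro i
    rw [C.exactAt_iff' i (i+1) (i+1+1) (by simp) (by simp)]
    exact moduleCat_exact_iff_function_exact _
  constructor
  · intro h i
    exact (h2 i).mp ((h1 (i+1)).mp (h (i+1)))
  · intro h i
    rw [h1]
    have := (h2 (i-1)).mpr (h (i-1))
    rwa [sub_add_cancel] at this

section Ladder

lemma exact_of_ladder {M₁ M₂ M₃ N₁ N₂ N₃ : Type*}
    [AddCommMonoid M₁] [AddCommMonoid M₂] [AddCommMonoid M₃]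
    [AddCommMonoid N₁] [AddCommMonoid N₂] [AddCommMonoid N₃]
    (e₁ : M₁ ≃+ N₁) (e₂ : M₂ ≃+ N₂) (e₃ : M₃ ≃+ N₃)
    {f : M₁ → M₂} {g : M₂ → M₃} {f' : N₁ → N₂} {g' : N₂ → N₃}
    (h₁ : ∀ x, e₂ (f x) = f' (e₁ x)) (h₂ : ∀ x, e₃ (g x) = g' (e₂ x))
    (hex : Function.Exact f g) : Function.Exact f' g' := by
  intro y'
  obtain ⟨y, rfl⟩ := e₂.surjective y'
  rw [← h₂, AddEquiv.map_eq_zero_iff, hex y]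
  constructor
  · rintro ⟨x, rfl⟩; exact ⟨e₁ x, (h₁ x).symm⟩
  · rintro ⟨x', hx⟩
    refine ⟨e₁.symm x', e₂.injective ?_⟩
    rw [h₁, e₁.apply_symm_apply, hx]

lemma exact_iff_of_ladder {M₁ M₂ M₃ N₁ N₂ N₃ : Type*}
    [AddCommMonoid M₁] [AddCommMonoid M₂] [AddCommMonoid M₃]
    [AddCommMonoid N₁] [AddCommMonoid N₂] [AddCommMonoid N₃]
    (e₁ : M₁ ≃+ N₁) (e₂ : M₂ ≃+ N₂) (e₃ : M₃ ≃+ N₃)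
    {f : M₁ → M₂} {g : M₂ → M₃} {f' : N₁ → N₂} {g' : N₂ → N₃}
    (h₁ : ∀ x, e₂ (f x) = f' (e₁ x)) (h₂ : ∀ x, e₃ (g x) = g' (e₂ x)) :
    Function.Exact f g ↔ Function.Exact f' g' := by
  constructor
  · exact exact_of_ladder e₁ e₂ e₃ h₁ h₂
  · refine exact_of_ladder e₁.symm e₂.symm e₃.symm ?_ ?_
    · intro x
      apply e₂.injective
      rw [AddEquiv.apply_symm_apply, h₁, e₁.apply_symm_apply]
    · intro x
      apply e₃.injective
      rw [AddEquiv.apply_symm_apply, h₂, e₂.apply_symm_apply]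

end Ladder

section Quot

variable {R A : Type} [CommRing R] [CommRing A] [Algebra R A] (I : Ideal A)
variable {M N : Type} [AddCommGroup M] [Module R M] [AddCommGroup N] [Module R N]

/-- `(A ⧸ I) ⊗[R] M ≃ (A ⊗[R] M) ⧸ I • ⊤`. -/
noncomputable def resQuotEquiv (M : Type) [AddCommGroup M] [Module R M] :
    ((A ⧸ I) ⊗[R] M) ≃+ ((A ⊗[R] M) ⧸ (I • ⊤ : Submodule A (A ⊗[R] M))) :=
  (AlgebraTensorModule.cancelBaseChange R A (A ⧸ I) (A ⧸ I) M).symm.toAddEquiv.trans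
    (quotTensorEquivQuotSMul (A ⊗[R] M) I).toAddEquiv

lemma cancel_symm_tmul (c : A ⧸ I) (z : M) :
    (AlgebraTensorModule.cancelBaseChange R A (A ⧸ I) (A ⧸ I) M).symm (c ⊗ₜ[R] z)
      = c ⊗ₜ[A] ((1 : A) ⊗ₜ[R] z) := by
  rw [LinearEquiv.symm_apply_eq]
  show c ⊗ₜ[R] z = ((1 : A) • c) ⊗ₜ[R] z
  rw [one_smul]

lemma resQuotEquiv_square (f : M →ₗ[R] N) (pf) (x : (A ⧸ I) ⊗[R] M) :
    resQuotEquiv I N (f.lTensor (A ⧸ I) x) =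
      Submodule.mapQ _ _ (f.baseChange A) pf (resQuotEquiv I M x) := by
  induction x using TensorProduct.induction_on with
  | zero => simp
  | tmul c x =>
      obtain ⟨a, rfl⟩ := Ideal.Quotient.mk_surjective c
      simp only [LinearMap.lTensor_tmul, resQuotEquiv, AddEquiv.trans_apply,
        LinearEquiv.coe_toAddEquiv]
      erw [cancel_symm_tmul, cancel_symm_tmul, quotTensorEquivQuotSMul_mk_tmul]
  | add x y hx hy =>
      simp only [map_add, hx, hy]

end Quot

section Main

variable (R A : Type) [CommRing R] [CommRing A] [Algebra R A]
  [IsLocalRing A] [IsNoetherianRing A]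

theorem main_general (X : CochainComplex (ModuleCat.{0} R) ℤ)
    (hfg : ∀ i, Module.Finite R (X.X i)) (hproj : ∀ i, Projective (X.X i))
    (N : ℤ) (hbd : ∀ i, N ≤ i → IsZero (X.X i)) :
    (∀ i : ℤ, IsZero
      ((((tensorLeft (ModuleCat.of R A)).mapHomologicalComplex
        (ComplexShape.up ℤ)).obj X).homology i)) ↔
    (∀ i : ℤ, IsZero
      ((((tensorLeft (ModuleCat.of R
          (IsLocalRing.ResidueField A))).mapHomologicalComplex
        (ComplexShape.up ℤ)).obj X).homology i)) := by
  classical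
  set m := IsLocalRing.maximalIdeal A with hm
  -- The base-changed complex
  let Y : ℤ → Type := fun i => A ⊗[R] ↑(X.X i)
  let d : ∀ i, Y i →ₗ[A] Y (i+1) := fun i => (X.d i (i+1)).hom.baseChange A
  have hdd : ∀ i x, d (i+1) (d i x) = 0 := by
    intro i x
    have h0 : (X.d (i+1) (i+1+1)).hom.comp (X.d i (i+1)).hom = 0 := by
      rw [← ModuleCat.hom_comp, X.d_comp_d i (i+1) (i+1+1), ModuleCat.hom_zero]
    have h1 : d (i+1) (d i x) = ((X.d (i+1) (i+1+1)).hom.comp (X.d i (i+1)).hom).baseChange A x := by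
      rw [LinearMap.baseChange_comp]; rfl
    rw [h1, h0, LinearMap.baseChange_zero]
    rfl
  have hsub : ∀ i, N ≤ i → Subsingleton (Y i) := by
    intro i hi
    have h0 : ∀ z : ↑(X.X i), z = 0 := by
      intro z
      have h1 : 𝟙 (X.X i) = 0 := (hbd i hi).eq_of_src _ _
      calc z = (𝟙 (X.X i) : X.X i ⟶ X.X i) z := rfl
        _ = (0 : X.X i ⟶ X.X i) z := by rw [h1]
        _ = 0 := rfl
    constructor
    intro a b
    have hz : ∀ z : Y i, z = 0 := by
      intro z
      induction z using TensorProduct.induction_on with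
      | zero => rfl
      | tmul a x => rw [h0 x, TensorProduct.tmul_zero]
      | add x y hx hy => rw [hx, hy, add_zero]
    rw [hz a, hz b]
  have hfinY : ∀ i, Module.Finite A (Y i) := by
    intro i
    haveI := hfg i
    exact Module.Finite.base_change R A ↑(X.X i)
  have hprojY : ∀ i, Module.Projective A (Y i) := by
    intro i
    haveI : Module.Projective R ↑(X.X i) := by
      haveI := hproj i; infer_instance
    infer_instance
  -- left side
  rw [acyclic_iff_exact, acyclic_iff_exact]
  have hleft : ∀ i : ℤ,
      (Function.Exact (LinearMap.lTensor (ModuleCat.of R A) (X.d i (i+1)).hom)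
        (LinearMap.lTensor (ModuleCat.of R A) (X.d (i+1) (i+1+1)).hom)) ↔
      Function.Exact (d i) (d (i+1)) := by
    intro i
    exact Iff.rfl
  have hright : ∀ i : ℤ,
      (Function.Exact (LinearMap.lTensor (ModuleCat.of R (IsLocalRing.ResidueField A))
          (X.d i (i+1)).hom)
        (LinearMap.lTensor (ModuleCat.of R (IsLocalRing.ResidueField A)) (X.d (i+1) (i+1+1)).hom)) ↔
      Function.Exact (dq d m i) (dq d m (i+1)) := by
    intro i
    refine exact_iff_of_ladder (resQuotEquiv m ↑(X.X i)) (resQuotEquiv m ↑(X.X (i+1)))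
      (resQuotEquiv m ↑(X.X (i+1+1))) ?_ ?_
    · intro x
      exact resQuotEquiv_square m (X.d i (i+1)).hom _ x
    · intro x
      exact resQuotEquiv_square m (X.d (i+1) (i+1+1)).hom _ x
  rw [forall_congr' hleft, forall_congr' hright]
  constructor
  · intro h
    exact quot_exact_of_exact d hprojY hdd N hsub h m
  · intro h
    exact exact_of_quot_exact d hfinY hprojY hdd N hsub h

end Main
end Prop15



/-- **Proposition 1.5.** Let `R` be commutative noetherian, `p` a prime of `R` and `X` a
bounded-above complex of finitely generated `R`-modules (modelled, as usual for objects of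
`D⁻(R)`, by a bounded-above complex of finitely generated projective modules, so that the
degreewise tensor product computes the derived tensor product). Then the localization
`X_p = R_p ⊗_R X` is acyclic iff `κ(p) ⊗^L_R X` is acyclic, where
`κ(p) = R_p/pR_p`. -/
theorem localization_acyclic_iff_residueField_acyclic (R : Type) [CommRing R]
    [IsNoetherianRing R] (X : CochainComplex (ModuleCat.{0} R) ℤ)
    (hfg : ∀ i, Module.Finite R (X.X i)) (hproj : ∀ i, Projective (X.X i))
    (N : ℤ) (hbd : ∀ i, N ≤ i → IsZero (X.X i)) (p : PrimeSpectrum R) :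
    (∀ i : ℤ, IsZero
      ((((tensorLeft (ModuleCat.of R (Localization.AtPrime p.asIdeal))).mapHomologicalComplex
        (ComplexShape.up ℤ)).obj X).homology i)) ↔
    (∀ i : ℤ, IsZero
      ((((tensorLeft (ModuleCat.of R
          (IsLocalRing.ResidueField (Localization.AtPrime p.asIdeal)))).mapHomologicalComplex
        (ComplexShape.up ℤ)).obj X).homology i)) := by
  haveI : IsNoetherianRing (Localization.AtPrime p.asIdeal) :=
    IsLocalization.isNoetherianRing p.asIdeal.primeCompl (Localization.AtPrime p.asIdeal) ‹_›
  exact Prop15.main_general R (Localization.AtPrime p.asIdeal) X hfg hproj N hbd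
end

section
/- Let R be a commutative noetherian ring and W a specialization-closed proper subset of Spec R such that for all ideals I, J of R, if V(I) ∩ V(J) ⊆ W then V(I) ⊆ W or V(J) ⊆ W. Then the family K of ideals I of R with V(I) ⊄ W has a maximum element P with respect to inclusion, and P is a prime ideal of R. -/
/-- **Proposition 3.7.** Let `R` be commutative noetherian and `W ⊊ Spec R` a
specialization-closed subset such that `V(I) ∩ V(J) ⊆ W` implies `V(I) ⊆ W` or
`V(J) ⊆ W`. Then the family of ideals `I` with `V(I) ⊄ W` has a maximum element `P`,
and `P` is prime. -/
theorem exists_max_ideal_prime_of_spcl (R : Type*) [CommRing R] [IsNoetherianRing R]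
    (W : Set (PrimeSpectrum R))
    (hspcl : ∀ q q' : PrimeSpectrum R, q ∈ W → q.asIdeal ≤ q'.asIdeal → q' ∈ W)
    (hW : W ≠ Set.univ)
    (h : ∀ I J : Ideal R,
      PrimeSpectrum.zeroLocus (R := R) ↑I ∩ PrimeSpectrum.zeroLocus (R := R) ↑J ⊆ W →
      PrimeSpectrum.zeroLocus (R := R) ↑I ⊆ W ∨ PrimeSpectrum.zeroLocus (R := R) ↑J ⊆ W) :
    ∃ P : Ideal R, P.IsPrime ∧ ¬ PrimeSpectrum.zeroLocus (R := R) ↑P ⊆ W ∧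
      ∀ I : Ideal R, ¬ PrimeSpectrum.zeroLocus (R := R) ↑I ⊆ W → I ≤ P := by
  set K : Set (Ideal R) := {I | ¬ PrimeSpectrum.zeroLocus (R := R) ↑I ⊆ W} with hK
  have hbot : (⊥ : Ideal R) ∈ K := by
    have hz : PrimeSpectrum.zeroLocus (R := R) ↑(⊥ : Ideal R) = Set.univ := by simp
    intro hc
    rw [hz] at hc
    exact hW (Set.eq_univ_of_univ_subset hc)
  -- maximal element of K
  have hwf : WellFounded ((· > ·) : Ideal R → Ideal R → Prop) := wellFounded_gt
  obtain ⟨P, hPK, hPmax⟩ := hwf.has_min K ⟨⊥, hbot⟩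
  -- K is closed under sup
  have hsup : ∀ I J : Ideal R, I ∈ K → J ∈ K → I ⊔ J ∈ K := by
    intro I J hI hJ hc
    rw [PrimeSpectrum.zeroLocus_sup] at hc
    rcases h I J hc with h' | h' <;> [exact hI h'; exact hJ h']
  -- P is the maximum
  have hmax : ∀ I : Ideal R, I ∈ K → I ≤ P := by
    intro I hI
    by_contra hle
    have hmem := hsup I P hI hPK
    have : I ⊔ P > P := lt_of_le_of_ne le_sup_right
      (fun e => hle (by rw [e]; exact le_sup_left))
    exact hPmax _ hmem this
  refine ⟨P, ?_, hPK, hmax⟩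
  constructor
  · intro htop
    apply hPK
    rw [htop]
    simp [PrimeSpectrum.zeroLocus_span]
  · intro x y hxy
    by_contra hc
    push_neg at hc
    obtain ⟨hx, hy⟩ := hc
    have hxP : P ⊔ Ideal.span {x} ∉ K := by
      intro hmem
      exact hx (hmax _ hmem (Ideal.mem_sup_right (Ideal.mem_span_singleton_self x)))
    have hyP : P ⊔ Ideal.span {y} ∉ K := by
      intro hmem
      exact hy (hmax _ hmem (Ideal.mem_sup_right (Ideal.mem_span_singleton_self y)))
    rw [hK, Set.mem_setOf_eq, not_not] at hxP hyP
    apply hPK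
    intro q hq
    have hq' : (P ⊔ Ideal.span {x}) * (P ⊔ Ideal.span {y}) ≤ P := by
      rw [Ideal.mul_sup, Ideal.sup_mul, Ideal.sup_mul]
      refine sup_le (sup_le Ideal.mul_le_right Ideal.mul_le_right) (sup_le Ideal.mul_le_left ?_)
      rw [Ideal.span_singleton_mul_span_singleton]
      exact (Ideal.span_singleton_le_iff_mem P).mpr hxy
    have : q ∈ PrimeSpectrum.zeroLocus (R := R) ↑((P ⊔ Ideal.span {x}) * (P ⊔ Ideal.span {y})) :=
      PrimeSpectrum.mem_zeroLocus _ _ |>.mpr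
        (le_trans hq' (PrimeSpectrum.mem_zeroLocus _ _ |>.mp hq))
    rw [PrimeSpectrum.zeroLocus_mul] at this
    rcases this with h' | h' <;> [exact hxP h'; exact hyP h']
end

section
/- Let R be a commutative noetherian ring, X a bounded-above complex of finitely generated R-modules, and for n ∈ ℤ, let C^n denote the cokernel of the differential d^{n-1} : X^{n-1} → X^n of a complex of finitely generated projective modules quasi-isomorphic to X. If the natural morphism X → ⊕_{n∈ℤ} C^n[-n] in the derived category factors as claimed and the identity-component maps f_n : X^n → C^n are null-homotopic for all n ≤ t, then C^t is a direct summand of X^{t+1} (hence projective) and H^n(X) = 0 for n ≤ t. -/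
open CategoryTheory Limits

lemma aux_split (R : Type) [CommRing R]
    (X : CochainComplex (ModuleCat.{0} R) ℤ) (n : ℤ)
    (g : X.X (n + 1) ⟶ cokernel (X.d (n - 1) n))
    (hg : X.d n (n + 1) ≫ g = cokernel.π (X.d (n - 1) n)) :
    cokernel.desc (X.d (n - 1) n) (X.d n (n + 1)) (X.d_comp_d _ _ _) ≫ g =
      𝟙 (cokernel (X.d (n - 1) n)) := by
  apply coequalizer.hom_ext
  simp [hg]

lemma aux_exact (R : Type) [CommRing R]
    (X : CochainComplex (ModuleCat.{0} R) ℤ) (n : ℤ)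
    (g : X.X (n + 1) ⟶ cokernel (X.d (n - 1) n))
    (hg : X.d n (n + 1) ≫ g = cokernel.π (X.d (n - 1) n)) :
    X.ExactAt n := by
  rw [X.exactAt_iff' (n - 1) n (n + 1) (by simp) (by simp)]
  set dbar : cokernel (X.d (n - 1) n) ⟶ X.X (n + 1) :=
    cokernel.desc (X.d (n - 1) n) (X.d n (n + 1)) (X.d_comp_d _ _ _) with hdbar
  have hsplit : dbar ≫ g = 𝟙 _ := aux_split R X n g hg
  have : IsSplitMono dbar := ⟨⟨⟨g, hsplit⟩⟩⟩
  let S₂ : ShortComplex (ModuleCat.{0} R) :=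
    ShortComplex.mk (X.d (n - 1) n) (cokernel.π (X.d (n - 1) n)) (cokernel.condition _)
  let φ : S₂ ⟶ X.sc' (n - 1) n (n + 1) :=
    { τ₁ := 𝟙 _
      τ₂ := 𝟙 _
      τ₃ := dbar
      comm₁₂ := (Category.id_comp _).trans (Category.comp_id _).symm
      comm₂₃ := (Category.id_comp _).trans (cokernel.π_desc _ _ _).symm }
  have : Epi φ.τ₁ := show Epi (𝟙 S₂.X₁) by infer_instance
  have : IsIso φ.τ₂ := show IsIso (𝟙 S₂.X₂) by infer_instance
  have : Mono φ.τ₃ := show Mono dbar by infer_instance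
  rw [← ShortComplex.exact_iff_of_epi_of_isIso_of_mono φ]
  exact S₂.exact_of_g_is_cokernel (cokernelIsCokernel _)

/-- Key step in **Proposition 2.1**. Let `X` be a complex of finitely generated projective
modules over a commutative noetherian ring, `Cⁿ = coker(dⁿ⁻¹)` and `fₙ : Xⁿ → Cⁿ` the
natural surjection. If for all `n ≤ t` the chain map `fₙ` is null-homotopic (i.e. there is
`g : Xⁿ⁺¹ → Cⁿ` with `g ∘ dⁿ = fₙ`), then `Cᵗ` is a direct summand of `Xᵗ⁺¹` (the induced
map `d̄ᵗ : Cᵗ → Xᵗ⁺¹` is a split monomorphism), hence projective, and `Hⁿ(X) = 0` for all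
`n ≤ t`. -/
theorem cokernel_summand_and_homology_vanishes (R : Type) [CommRing R] [IsNoetherianRing R]
    (X : CochainComplex (ModuleCat.{0} R) ℤ)
    (hfg : ∀ i, Module.Finite R (X.X i)) (hproj : ∀ i, Projective (X.X i)) (t : ℤ)
    (hhtpy : ∀ n : ℤ, n ≤ t → ∃ g : X.X (n + 1) ⟶ cokernel (X.d (n - 1) n),
      X.d n (n + 1) ≫ g = cokernel.π (X.d (n - 1) n)) :
    (∃ r : X.X (t + 1) ⟶ cokernel (X.d (t - 1) t),
      cokernel.desc (X.d (t - 1) t) (X.d t (t + 1)) (X.d_comp_d _ _ _) ≫ r =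
        𝟙 (cokernel (X.d (t - 1) t))) ∧
    Projective (cokernel (X.d (t - 1) t)) ∧
    ∀ n : ℤ, n ≤ t → IsZero (X.homology n) := by
  obtain ⟨g, hg⟩ := hhtpy t le_rfl
  have hsplit := aux_split R X t g hg
  refine ⟨⟨g, hsplit⟩, ?_, ?_⟩
  · -- Projective: cokernel is a retract of X.X (t+1)
    have := hproj (t + 1)
    refine ⟨fun f e => ?_⟩
    refine ⟨cokernel.desc (X.d (t - 1) t) (X.d t (t + 1)) (X.d_comp_d _ _ _) ≫
      Projective.factorThru (g ≫ f) e, ?_⟩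
    rw [Category.assoc, Projective.factorThru_comp, ← Category.assoc, hsplit,
      Category.id_comp]
  · intro n hn
    obtain ⟨g', hg'⟩ := hhtpy n hn
    rw [← HomologicalComplex.exactAt_iff_isZero_homology]
    exact aux_exact R X n g' hg'
end
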